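/- Integral representation of the normalized level-2 multiple zeta function: for positive integers l_1,…,l_{m−1} and Re s > 1, T(l_1,…,l_{m−1},s) = (1/(Γ(l_1)⋯Γ(l_{m−1})Γ(s))) ∫_0^∞⋯∫_0^∞ x_1^{l_1−1}⋯x_{m−1}^{l_{m−1}−1} x_m^{s−1} ∏_{j=1}^m 1/sinh(x_j+⋯+x_m) dx_1⋯dx_m. -/

import Mathlib

open Real Finset MeasureTheory

/-- The level-2 multiple zeta function
`T_0(l_1,…,l_r,s) = ∑ 1/(m_1^{l_1} ⋯ m_r^{l_r} m_{r+1}^s)`, the sum over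
`0 < m_1 < ⋯ < m_{r+1}` with `m_i ≡ i (mod 2)`, i.e. `m_j = ∑_{i ≤ j} (2 n_i + 1)`. -/
noncomputable def T0 (r : ℕ) (l : Fin r → ℕ) (s : ℂ) : ℂ :=
  ∑' n : Fin (r + 1) → ℕ,
    1 / ((∏ j : Fin r,
        ((∑ i ∈ Finset.Iic (Fin.castSucc j), (2 * n i + 1) : ℕ) : ℂ) ^ (l j)) *
      ((∑ i, (2 * n i + 1) : ℕ) : ℂ) ^ s)

/-- The normalized level-2 multiple zeta function `T = 2^{r+1} T_0` (depth `r+1`). -/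
noncomputable def T (r : ℕ) (l : Fin r → ℕ) (s : ℂ) : ℂ := 2 ^ (r + 1) * T0 r l s

/-!
Expanding `1 / sinh y = 2 ∑ₙ e^{-(2n+1)y}` in every factor and regrouping the exponent by
Abel summation, `∑_j (2n_j+1)(x_j + ⋯ + x_m) = ∑_i m_i x_i` with `m_i = ∑_{j ≤ i} (2n_j+1)`,
the integrand becomes `2^m ∑ₙ ∏_i x_i^{k_i-1} e^{-m_i x_i}` (with `k_m = s`). Each term is a
product of one-dimensional Gamma integrals `∫₀^∞ t^{k-1} e^{-at} dt = Γ(k) / a^k`. Summation and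
integration may be interchanged because the integrals of the absolute values form the same series
with the real exponents `Re k_i ≥ 1`, `Re s > 1`, which is dominated by `∏_i (2n_i+1)^{-1-ε}`.
-/

lemma hasSum_one_div_sinh {y : ℝ} (hy : 0 < y) :
    HasSum (fun n : ℕ => 2 * rexp (-((2 * n + 1) * y))) (1 / sinh y) := by
  have hq : rexp (-y) ^ 2 < 1 := by
    rw [← exp_nat_mul, exp_lt_one_iff]; push_cast; linarith
  have hgeom := (hasSum_geometric_of_lt_one (by positivity) hq).mul_left (2 * rexp (-y))
  have hterm (n : ℕ) : 2 * rexp (-y) * (rexp (-y) ^ 2) ^ n = 2 * rexp (-((2 * n + 1) * y)) := by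
    rw [← pow_mul, ← exp_nat_mul, mul_assoc, ← exp_add]
    push_cast
    ring_nf
  have hsum : 2 * rexp (-y) * (1 - rexp (-y) ^ 2)⁻¹ = 1 / sinh y := by
    have hsinh : rexp y - rexp (-y) ≠ 0 := by
      have := sinh_pos_iff.mpr hy
      rw [sinh_eq] at this
      linarith
    rw [sinh_eq]
    field_simp [hsinh, (sub_pos.mpr hq).ne']
    rw [mul_sub, ← exp_add, neg_add_cancel, exp_zero, sq]
  simpa only [hterm, hsum] using hgeom

lemma hasSum_fin_prod_of_nonneg {k : ℕ} {f : Fin k → ℕ → ℝ} (hf : ∀ i n, 0 ≤ f i n)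
    {a : Fin k → ℝ} (h : ∀ i, HasSum (f i) (a i)) :
    HasSum (fun n : Fin k → ℕ => ∏ i, f i (n i)) (∏ i, a i) := by
  induction k with
  | zero =>
    simp only [univ_eq_empty, prod_empty]
    exact hasSum_single default fun b hb => absurd (Subsingleton.elim b default) hb
  | succ k ih =>
    set g : (Fin k → ℕ) → ℝ := fun n => ∏ i : Fin k, f i.succ (n i)
    have htail : HasSum g (∏ i : Fin k, a i.succ) := ih (fun i n => hf i.succ n) (h ·.succ)
    have hpair : HasSum (fun p : ℕ × (Fin k → ℕ) => f 0 p.1 * g p.2)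
        (a 0 * ∏ i : Fin k, a i.succ) :=
      (h 0).mul htail <| Summable.mul_of_nonneg (h 0).summable htail.summable (hf 0)
        fun n => prod_nonneg fun i _ => hf _ _
    rw [Fin.prod_univ_succ, ← (Fin.consEquiv fun _ => ℕ).hasSum_iff]
    convert hpair using 2 with p
    simp [g, Fin.consEquiv, Fin.prod_univ_succ]

lemma Finset.sum_mul_sum_Ici {ι R : Type*} [Fintype ι] [Preorder ι] [LocallyFiniteOrderTop ι]
    [LocallyFiniteOrderBot ι] [NonUnitalNonAssocSemiring R] (a x : ι → R) :
    ∑ j, a j * ∑ i ∈ Ici j, x i = ∑ i, (∑ j ∈ Iic i, a j) * x i := by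
  simp_rw [mul_sum, sum_mul]
  exact sum_comm' fun j i => by simp [and_comm]

def oddPartialSum {k : ℕ} (n : Fin k → ℕ) (i : Fin k) : ℕ := ∑ j ∈ Iic i, (2 * n j + 1)

lemma two_mul_add_one_le_oddPartialSum {k : ℕ} (n : Fin k → ℕ) {i j : Fin k} (h : j ≤ i) :
    2 * n j + 1 ≤ oddPartialSum n i :=
  single_le_sum (f := fun j => 2 * n j + 1) (fun _ _ => Nat.zero_le _) (mem_Iic.mpr h)

lemma oddPartialSum_last {r : ℕ} (n : Fin (r + 1) → ℕ) :
    oddPartialSum n (Fin.last r) = ∑ i, (2 * n i + 1) := by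
  rw [oddPartialSum, show Iic (Fin.last r) = univ by ext; simp [Fin.le_last]]

lemma hasSum_prod_one_div_sinh {k : ℕ} {x : Fin k → ℝ} (hx : ∀ i, 0 < x i) :
    HasSum (fun n : Fin k → ℕ => 2 ^ k * ∏ i, rexp (-(oddPartialSum n i * x i)))
      (∏ j, 1 / sinh (∑ i ∈ Ici j, x i)) := by
  have hy (j : Fin k) : 0 < ∑ i ∈ Ici j, x i := sum_pos (fun i _ => hx i) ⟨j, mem_Ici.mpr le_rfl⟩
  convert hasSum_fin_prod_of_nonneg (fun j m => by positivity)
    (fun j => hasSum_one_div_sinh (hy j)) using 2 with n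
  rw [prod_mul_distrib, prod_const, card_univ, Fintype.card_fin, ← exp_sum, ← exp_sum,
    sum_neg_distrib, sum_neg_distrib, sum_mul_sum_Ici]
  push_cast [oddPartialSum]
  rfl

lemma summable_two_mul_add_one_rpow_neg {p : ℝ} (hp : 1 < p) :
    Summable fun m : ℕ => (2 * m + 1 : ℝ) ^ (-p) := by
  have hshift : Summable fun m : ℕ => ((m + 1 : ℕ) : ℝ) ^ (-p) :=
    (summable_nat_add_iff 1).mpr (Real.summable_nat_rpow.mpr (by linarith))
  refine hshift.of_nonneg_of_le (fun m => by positivity) fun m => ?_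
  exact rpow_le_rpow_of_nonpos (by positivity) (by push_cast; linarith) (by linarith)

lemma prod_oddPartialSum_rpow_neg_le {r : ℕ} (n : Fin (r + 1) → ℕ) {σ : Fin (r + 1) → ℝ}
    (hσ : ∀ i, 1 ≤ σ i) {ε : ℝ} (hε : 0 ≤ ε) (hεσ : (r + 1) * ε = σ (Fin.last r) - 1) :
    ∏ i, (oddPartialSum n i : ℝ) ^ (-σ i) ≤ ∏ i, (2 * n i + 1 : ℝ) ^ (-(1 + ε)) := by
  set m : Fin (r + 1) → ℝ := fun i => oddPartialSum n i
  have hu (i : Fin (r + 1)) : 0 < (2 * n i + 1 : ℝ) := by positivity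
  have hum {i j : Fin (r + 1)} (h : j ≤ i) : (2 * n j + 1 : ℝ) ≤ m i := by
    simp only [m]
    exact_mod_cast two_mul_add_one_le_oddPartialSum n h
  have hm (i : Fin (r + 1)) : 1 ≤ m i := le_trans (by linarith [hu i]) (hum le_rfl)
  -- The excess `σ_last - 1` is spread evenly over all indices, as `m_last ≥ 2 n_i + 1` for all `i`.
  calc ∏ i, m i ^ (-σ i) = (∏ i, m i ^ (-1 : ℝ)) * ∏ i, m i ^ (-(σ i - 1)) := by
        rw [← prod_mul_distrib]
        refine prod_congr rfl fun i _ => ?_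
        rw [← rpow_add (by linarith [hm i])]
        ring_nf
    _ ≤ (∏ i, m i ^ (-1 : ℝ)) * m (Fin.last r) ^ (-(σ (Fin.last r) - 1)) := by
        refine mul_le_mul_of_nonneg_left ?_ (prod_nonneg fun i _ => by positivity)
        rw [Fin.prod_univ_castSucc]
        exact mul_le_of_le_one_left (by positivity) (prod_le_one (fun i _ => by positivity)
          fun i _ => rpow_le_one_of_one_le_of_nonpos (hm _) (by linarith [hσ i.castSucc]))
    _ = (∏ i, m i ^ (-1 : ℝ)) * ∏ _i : Fin (r + 1), m (Fin.last r) ^ (-ε) := by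
        rw [prod_const, card_univ, Fintype.card_fin, ← rpow_natCast,
          ← rpow_mul (by linarith [hm (Fin.last r)])]
        push_cast
        congr 2
        linarith
    _ ≤ (∏ i, (2 * n i + 1 : ℝ) ^ (-1 : ℝ)) * ∏ i, (2 * n i + 1 : ℝ) ^ (-ε) := by
        refine mul_le_mul (prod_le_prod (fun i _ => by positivity) fun i _ => ?_)
          (prod_le_prod (fun i _ => by positivity) fun i _ => ?_)
          (prod_nonneg fun i _ => by positivity) (prod_nonneg fun i _ => by positivity)
        · exact rpow_le_rpow_of_nonpos (hu i) (hum le_rfl) (by norm_num)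
        · exact rpow_le_rpow_of_nonpos (hu i) (hum (Fin.le_last i)) (by linarith)
    _ = ∏ i, (2 * n i + 1 : ℝ) ^ (-(1 + ε)) := by
        rw [← prod_mul_distrib]
        refine prod_congr rfl fun i _ => ?_
        rw [← rpow_add (hu i)]
        ring_nf

lemma summable_prod_oddPartialSum_rpow_neg {r : ℕ} {σ : Fin (r + 1) → ℝ} (hσ : ∀ i, 1 ≤ σ i)
    (hlast : 1 < σ (Fin.last r)) :
    Summable fun n : Fin (r + 1) → ℕ => ∏ i, (oddPartialSum n i : ℝ) ^ (-σ i) := by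
  set ε := (σ (Fin.last r) - 1) / (r + 1)
  have hε : 0 < ε := div_pos (by linarith) (by positivity)
  have hdom : Summable fun n : Fin (r + 1) → ℕ => ∏ i, (2 * n i + 1 : ℝ) ^ (-(1 + ε)) :=
    (hasSum_fin_prod_of_nonneg (fun _ _ => by positivity)
      fun _ => (summable_two_mul_add_one_rpow_neg (by linarith)).hasSum).summable
  refine hdom.of_nonneg_of_le (fun n => by positivity) fun n => ?_
  exact prod_oddPartialSum_rpow_neg_le n hσ hε.le (by simp only [ε]; field_simp)

lemma integrableOn_cpow_mul_exp_neg_mul_Ioi {c : ℂ} (hc : 0 < c.re) {a : ℝ} (ha : 0 < a) :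
    IntegrableOn (fun t : ℝ => (t : ℂ) ^ (c - 1) * Complex.exp (-(a * t))) (Set.Ioi 0) := by
  have h := Complex.GammaIntegral_convergent hc
  rw [← mul_zero a, ← integrableOn_Ioi_comp_mul_left_iff _ _ ha] at h
  refine IntegrableOn.congr_fun (h.const_mul (1 / (a : ℂ) ^ (c - 1))) (fun t (ht : 0 < t) => ?_)
    measurableSet_Ioi
  have ha' : (a : ℂ) ^ (c - 1) ≠ 0 := by
    simp [Complex.cpow_eq_zero_iff, ha.ne']
  simp only [Complex.ofReal_mul, Complex.mul_cpow_ofReal_nonneg ha.le ht.le]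
  push_cast
  field_simp

lemma norm_cpow_mul_exp_neg_mul {c : ℂ} {a t : ℝ} (ht : 0 < t) :
    ‖(t : ℂ) ^ (c - 1) * Complex.exp (-(a * t))‖ = t ^ (c.re - 1) * rexp (-(a * t)) := by
  rw [norm_mul, Complex.norm_cpow_eq_rpow_re_of_pos ht, Complex.norm_exp]
  simp

lemma integral_cpow_mul_exp_neg_mul_Ioi_eq_div {c : ℂ} (hc : 0 < c.re) {a : ℝ} (ha : 0 < a) :
    ∫ t : ℝ in Set.Ioi 0, (t : ℂ) ^ (c - 1) * Complex.exp (-(a * t)) =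
      Complex.Gamma c / (a : ℂ) ^ c := by
  rw [Complex.integral_cpow_mul_exp_neg_mul_Ioi hc ha, one_div,
    Complex.inv_cpow_ofReal_nonneg ha.le, inv_mul_eq_div]

lemma integral_norm_cpow_mul_exp_neg_mul_Ioi {c : ℂ} (hc : 0 < c.re) {a : ℝ} (ha : 0 < a) :
    ∫ t : ℝ in Set.Ioi 0, ‖(t : ℂ) ^ (c - 1) * Complex.exp (-(a * t))‖ =
      Real.Gamma c.re * a ^ (-c.re) := by
  rw [setIntegral_congr_fun measurableSet_Ioi fun t (ht : 0 < t) => norm_cpow_mul_exp_neg_mul ht,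
    Real.integral_rpow_mul_exp_neg_mul_Ioi hc ha, one_div, inv_rpow ha.le, ← rpow_neg ha.le,
    mul_comm]

lemma integrableOn_univ_pi_prod {ι E 𝕜 : Type*} [Fintype ι] [MeasureSpace E]
    [SigmaFinite (volume : Measure E)] [RCLike 𝕜] {f : ι → E → 𝕜} {s : ι → Set E}
    (hf : ∀ i, IntegrableOn (f i) (s i)) :
    IntegrableOn (fun x : ι → E => ∏ i, f i (x i)) (Set.univ.pi s) := by
  rw [IntegrableOn, volume_pi, Measure.restrict_pi_pi]
  exact Integrable.fintype_prod hf

lemma setIntegral_univ_pi_prod {ι E 𝕜 : Type*} [Fintype ι] [MeasureSpace E]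
    [SigmaFinite (volume : Measure E)] [RCLike 𝕜] (f : ι → E → 𝕜) (s : ι → Set E) :
    ∫ x in Set.univ.pi s, ∏ i, f i (x i) = ∏ i, ∫ t in s i, f i t := by
  rw [volume_pi, Measure.restrict_pi_pi, integral_fintype_prod_eq_prod]

lemma integrableOn_prod_cpow_mul_exp_neg_mul {ι : Type*} [Fintype ι] {c : ι → ℂ}
    (hc : ∀ i, 0 < (c i).re) {a : ι → ℝ} (ha : ∀ i, 0 < a i) :
    IntegrableOn (fun x : ι → ℝ => ∏ i, (x i : ℂ) ^ (c i - 1) * Complex.exp (-(a i * x i)))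
      (Set.univ.pi fun _ => Set.Ioi 0) :=
  integrableOn_univ_pi_prod fun i => integrableOn_cpow_mul_exp_neg_mul_Ioi (hc i) (ha i)

lemma integral_prod_cpow_mul_exp_neg_mul {ι : Type*} [Fintype ι] {c : ι → ℂ}
    (hc : ∀ i, 0 < (c i).re) {a : ι → ℝ} (ha : ∀ i, 0 < a i) :
    ∫ x in Set.univ.pi fun _ : ι => Set.Ioi (0 : ℝ),
        ∏ i, (x i : ℂ) ^ (c i - 1) * Complex.exp (-(a i * x i)) =
      (∏ i, Complex.Gamma (c i)) / ∏ i, (a i : ℂ) ^ c i := by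
  rw [setIntegral_univ_pi_prod (fun i (t : ℝ) => (t : ℂ) ^ (c i - 1) * Complex.exp (-(a i * t))),
    ← prod_div_distrib]
  exact prod_congr rfl fun i _ => integral_cpow_mul_exp_neg_mul_Ioi_eq_div (hc i) (ha i)

lemma integral_norm_prod_cpow_mul_exp_neg_mul {ι : Type*} [Fintype ι] {c : ι → ℂ}
    (hc : ∀ i, 0 < (c i).re) {a : ι → ℝ} (ha : ∀ i, 0 < a i) :
    ∫ x in Set.univ.pi fun _ : ι => Set.Ioi (0 : ℝ),
        ‖∏ i, (x i : ℂ) ^ (c i - 1) * Complex.exp (-(a i * x i))‖ =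
      (∏ i, Real.Gamma (c i).re) * ∏ i, a i ^ (-(c i).re) := by
  simp_rw [norm_prod]
  rw [setIntegral_univ_pi_prod (fun i (t : ℝ) => ‖(t : ℂ) ^ (c i - 1) * Complex.exp (-(a i * t))‖),
    ← prod_mul_distrib]
  exact prod_congr rfl fun i _ => integral_norm_cpow_mul_exp_neg_mul_Ioi (hc i) (ha i)

lemma hasSum_prod_cpow_mul_exp_neg_oddPartialSum {k : ℕ} (c : Fin k → ℂ) {x : Fin k → ℝ}
    (hx : ∀ i, 0 < x i) :
    HasSum (fun n : Fin k → ℕ => 2 ^ k *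
        ∏ i, (x i : ℂ) ^ (c i - 1) * Complex.exp (-((oddPartialSum n i : ℝ) * x i)))
      ((∏ i, (x i : ℂ) ^ (c i - 1)) * ∏ j, 1 / ((sinh (∑ i ∈ Ici j, x i) : ℝ) : ℂ)) := by
  have h := (Complex.hasSum_ofReal.mpr (hasSum_prod_one_div_sinh hx)).mul_left
    (∏ i, (x i : ℂ) ^ (c i - 1))
  push_cast at h ⊢
  refine h.congr_fun fun n => ?_
  rw [prod_mul_distrib]
  ring

theorem integral_prod_cpow_mul_prod_one_div_sinh {r : ℕ} {c : Fin (r + 1) → ℂ}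
    (hc : ∀ i, 1 ≤ (c i).re) (hlast : 1 < (c (Fin.last r)).re) :
    ∫ x in Set.univ.pi (fun _ : Fin (r + 1) => Set.Ioi (0 : ℝ)),
        (∏ i, ((x i : ℝ) : ℂ) ^ (c i - 1)) * ∏ j, 1 / ((sinh (∑ i ∈ Ici j, x i) : ℝ) : ℂ) =
      2 ^ (r + 1) * (∏ i, Complex.Gamma (c i)) *
        ∑' n : Fin (r + 1) → ℕ, 1 / ∏ i, ((oddPartialSum n i : ℕ) : ℂ) ^ c i := by
  have hc0 (i : Fin (r + 1)) : 0 < (c i).re := by linarith [hc i]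
  have hm (n : Fin (r + 1) → ℕ) (i : Fin (r + 1)) : (0 : ℝ) < oddPartialSum n i := by
    exact_mod_cast (Nat.succ_pos _).trans_le (two_mul_add_one_le_oddPartialSum n le_rfl)
  set F : (Fin (r + 1) → ℕ) → (Fin (r + 1) → ℝ) → ℂ := fun n x =>
    2 ^ (r + 1) * ∏ i, (x i : ℂ) ^ (c i - 1) * Complex.exp (-((oddPartialSum n i : ℝ) * x i))
  have hint (n : Fin (r + 1) → ℕ) : IntegrableOn (F n) (Set.univ.pi fun _ => Set.Ioi 0) :=
    (integrableOn_prod_cpow_mul_exp_neg_mul hc0 (hm n)).const_mul _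
  have hsum : Summable fun n => ∫ x in Set.univ.pi fun _ => Set.Ioi 0, ‖F n x‖ := by
    have hnorm (n : Fin (r + 1) → ℕ) : ∫ x in Set.univ.pi fun _ => Set.Ioi 0, ‖F n x‖ =
        2 ^ (r + 1) *
          ((∏ i, Real.Gamma (c i).re) * ∏ i, (oddPartialSum n i : ℝ) ^ (-(c i).re)) := by
      simp only [F, norm_mul, norm_pow, RCLike.norm_ofNat, integral_const_mul,
        integral_norm_prod_cpow_mul_exp_neg_mul hc0 (hm n)]
    simp_rw [hnorm]
    exact ((summable_prod_oddPartialSum_rpow_neg (σ := fun i => (c i).re) hc hlast).mul_left _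
      ).mul_left _
  calc _ = ∫ x in Set.univ.pi fun _ => Set.Ioi 0, ∑' n, F n x :=
        setIntegral_congr_fun (MeasurableSet.univ_pi fun _ => measurableSet_Ioi) fun x hx =>
          (hasSum_prod_cpow_mul_exp_neg_oddPartialSum c (Set.mem_univ_pi.mp hx)).tsum_eq.symm
    _ = ∑' n, ∫ x in Set.univ.pi fun _ => Set.Ioi 0, F n x :=
        (integral_tsum_of_summable_integral_norm hint hsum).symm
    _ = _ := by
        rw [← tsum_mul_left]
        refine tsum_congr fun n => ?_
        simp only [F, integral_const_mul]
        rw [integral_prod_cpow_mul_exp_neg_mul hc0 (hm n)]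
        simp only [Complex.ofReal_natCast, mul_one_div, mul_div_assoc]

lemma T0_eq_tsum_oddPartialSum (r : ℕ) (l : Fin r → ℕ) (s : ℂ) :
    T0 r l s = ∑' n : Fin (r + 1) → ℕ,
      1 / ∏ i, ((oddPartialSum n i : ℕ) : ℂ) ^
        Fin.snoc (α := fun _ => ℂ) (fun j => (l j : ℂ)) s i := by
  refine tsum_congr fun n => ?_
  simp only [Fin.prod_univ_castSucc, Fin.snoc_castSucc, Fin.snoc_last, Complex.cpow_natCast,
    oddPartialSum_last]
  rfl

/-- Integral representation of the normalized level-2 multiple zeta function. -/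
theorem stmt17 (r : ℕ) (l : Fin r → ℕ) (hl : ∀ j, 1 ≤ l j) (s : ℂ) (hs : 1 < s.re) :
    T r l s =
      (1 / ((∏ j, Complex.Gamma (l j)) * Complex.Gamma s)) *
        ∫ x in Set.univ.pi (fun _ : Fin (r + 1) => Set.Ioi (0 : ℝ)),
          (∏ j : Fin r, ((x (Fin.castSucc j) : ℝ) : ℂ) ^ (l j - 1)) *
            ((x (Fin.last r) : ℝ) : ℂ) ^ (s - 1) *
            ∏ j : Fin (r + 1),
              1 / ((Real.sinh (∑ i ∈ Finset.Ici j, x i) : ℝ) : ℂ) := by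
  rw [T, T0_eq_tsum_oddPartialSum]
  set c : Fin (r + 1) → ℂ := Fin.snoc (α := fun _ => ℂ) (fun j => (l j : ℂ)) s
  have hc (i : Fin (r + 1)) : 1 ≤ (c i).re := by
    induction i using Fin.lastCases with
    | last => simpa [c] using hs.le
    | cast j => simpa [c] using hl j
  have hpow (x : Fin (r + 1) → ℝ) : ∏ i, ((x i : ℝ) : ℂ) ^ (c i - 1) =
      (∏ j : Fin r, ((x (Fin.castSucc j) : ℝ) : ℂ) ^ (l j - 1)) *
        ((x (Fin.last r) : ℝ) : ℂ) ^ (s - 1) := by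
    simp [c, Fin.prod_univ_castSucc, ← Complex.cpow_natCast, Nat.cast_sub (hl _)]
  have hΓ : ∏ i, Complex.Gamma (c i) = (∏ j, Complex.Gamma (l j)) * Complex.Gamma s := by
    simp [c, Fin.prod_univ_castSucc]
  have hΓ0 : (∏ j, Complex.Gamma (l j)) * Complex.Gamma s ≠ 0 := by
    rw [← hΓ, prod_ne_zero_iff]
    exact fun i _ => Complex.Gamma_ne_zero_of_re_pos (by linarith [hc i])
  simp_rw [← hpow]
  rw [integral_prod_cpow_mul_prod_one_div_sinh hc (by simpa [c] using hs), hΓ, one_div,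
    eq_inv_mul_iff_mul_eq₀ hΓ0]
  ring
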